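/- Let K be a field, V a finite-dimensional K-vector space, and V1, V2 subspaces of V with V1 + V2 = V. Under the canonical nondegenerate pairing between ⋀²V and ⋀²(V*), the annihilator inside ⋀²V of the subspace V1⁰ ∧ V2⁰ of ⋀²(V*) (the span of all ξ ∧ η with ξ ∈ V1⁰ and η ∈ V2⁰) is exactly ⋀²V1 + ⋀²V2. (This is the key identity in the paper's proof of its Lemma 3.5.) -/

import Mathlib

open ExteriorAlgebra Module

section ExtSq

variable {K : Type*} [Field K]

variable (K) in
/-- The exterior square `⋀²M`, realized as the degree-2 component of the exterior
algebra of `M`. -/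
noncomputable def exteriorSquare (M : Type*) [AddCommGroup M] [Module K M] :
    Submodule K (ExteriorAlgebra K M) :=
  LinearMap.range (ι K : M →ₗ[K] ExteriorAlgebra K M) ^ 2

variable {V : Type*} [AddCommGroup V] [Module K V]

/-- For a subspace `W ⊆ V`, the image of `⋀²W` in `⋀²V` under the map induced by the
inclusion `W ↪ V` (the span of the products `ι u * ι w` with `u, w ∈ W`). -/
noncomputable def exteriorSquareOf (W : Submodule K V) : Submodule K (ExteriorAlgebra K V) :=
  LinearMap.range ((ι K : V →ₗ[K] ExteriorAlgebra K V) ∘ₗ W.subtype) ^ 2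

variable {M N : Type*} [AddCommGroup M] [Module K M] [AddCommGroup N] [Module K N]

/-- A bilinear map on `M` as a multilinear map on `Fin 2 → M`. -/
noncomputable def bilinToMulti (g : M →ₗ[K] M →ₗ[K] N) :
    MultilinearMap K (fun _ : Fin 2 => M) N :=
  LinearMap.uncurryLeft
    ((MultilinearMap.ofSubsingletonₗ K K M N (0 : Fin 1)).toLinearMap ∘ₗ g)

/-- The alternating map on `Fin 2 → M` associated to a bilinear map `g` vanishing on
the diagonal; on a pair `(u, w)` it is `g u w`. -/
noncomputable def altOfBilin (g : M →ₗ[K] M →ₗ[K] N) (hg : ∀ v, g v v = 0) :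
    M [⋀^Fin 2]→ₗ[K] N where
  toMultilinearMap := bilinToMulti g
  map_eq_zero_of_eq' := by
    intro v i j hv hij
    have h01 : v 0 = v 1 := by
      fin_cases i <;> fin_cases j <;> simp_all
    show bilinToMulti g v = 0
    show g (v 0) (v 1) = 0
    rw [h01, hg]

@[simp] lemma altOfBilin_apply (g : M →ₗ[K] M →ₗ[K] N) (hg : ∀ v, g v v = 0)
    (v : Fin 2 → M) : altOfBilin g hg v = g (v 0) (v 1) := rfl

variable (V) in
/-- The bilinear map `(u, w) ↦ ξ(u)η(w) − ξ(w)η(u)` on `V`, for `ξ, η ∈ V*`. -/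
noncomputable def innerBilin (ξ η : Dual K V) : V →ₗ[K] V →ₗ[K] K :=
  LinearMap.mk₂ K (fun u w => ξ u * η w - ξ w * η u)
    (fun u₁ u₂ w => by simp; ring)
    (fun c u w => by simp; ring)
    (fun u w₁ w₂ => by simp; ring)
    (fun c u w => by simp; ring)

variable (V) in
/-- The alternating form `(u, w) ↦ ξ(u)η(w) − ξ(w)η(u)` on `V`. -/
noncomputable def innerAlt (ξ η : Dual K V) : V [⋀^Fin 2]→ₗ[K] K :=
  altOfBilin (innerBilin V ξ η) (fun v => by simp [innerBilin])

variable (K V) in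
/-- Extension of an alternating 2-form on `V` to a linear functional on the exterior
algebra, supported in degree 2. -/
noncomputable def liftDeg2 : (V [⋀^Fin 2]→ₗ[K] K) →ₗ[K] (ExteriorAlgebra K V →ₗ[K] K) :=
  ExteriorAlgebra.liftAlternating ∘ₗ
    LinearMap.single K (fun i => V [⋀^Fin i]→ₗ[K] K) 2

lemma innerAlt_add_left (ξ₁ ξ₂ η : Dual K V) :
    innerAlt V (ξ₁ + ξ₂) η = innerAlt V ξ₁ η + innerAlt V ξ₂ η := by
  ext v; simp [innerAlt, innerBilin]; ring

lemma innerAlt_smul_left (c : K) (ξ η : Dual K V) :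
    innerAlt V (c • ξ) η = c • innerAlt V ξ η := by
  ext v; simp [innerAlt, innerBilin]; ring

lemma innerAlt_add_right (ξ η₁ η₂ : Dual K V) :
    innerAlt V ξ (η₁ + η₂) = innerAlt V ξ η₁ + innerAlt V ξ η₂ := by
  ext v; simp [innerAlt, innerBilin]; ring

lemma innerAlt_smul_right (c : K) (ξ η : Dual K V) :
    innerAlt V ξ (c • η) = c • innerAlt V ξ η := by
  ext v; simp [innerAlt, innerBilin]; ring

lemma innerAlt_self (ξ : Dual K V) : innerAlt V ξ ξ = 0 := by
  ext v; simp [innerAlt, innerBilin]; ring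

variable (K V) in
/-- The canonical pairing, as a bilinear map `V* → V* → (⋀V)*`, sending `(ξ, η)` to the
functional determined in degree 2 by `u ∧ w ↦ ξ(u)η(w) − ξ(w)η(u)`. -/
noncomputable def pairingBilin :
    Dual K V →ₗ[K] Dual K V →ₗ[K] (ExteriorAlgebra K V →ₗ[K] K) :=
  LinearMap.mk₂ K (fun ξ η => liftDeg2 K V (innerAlt V ξ η))
    (fun ξ₁ ξ₂ η => by (try dsimp only); rw [innerAlt_add_left, map_add])
    (fun c ξ η => by (try dsimp only); rw [innerAlt_smul_left, map_smul])
    (fun ξ η₁ η₂ => by (try dsimp only); rw [innerAlt_add_right, map_add])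
    (fun c ξ η => by (try dsimp only); rw [innerAlt_smul_right, map_smul])

variable (K V) in
/-- The canonical pairing between the exterior algebra of `V*` and that of `V`,
which in degree 2 restricts to the canonical nondegenerate pairing
`⟨ξ ∧ η, u ∧ w⟩ = ξ(u)η(w) − ξ(w)η(u)` between `⋀²(V*)` and `⋀²V`. -/
noncomputable def extPairing :
    ExteriorAlgebra K (Dual K V) →ₗ[K] (ExteriorAlgebra K V →ₗ[K] K) :=
  ExteriorAlgebra.liftAlternating
    (Pi.single 2 (altOfBilin (pairingBilin K V)
      (fun ξ => by
        simp only [pairingBilin, LinearMap.mk₂_apply, innerAlt_self, map_zero])))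

end ExtSq

/-! Pick `A ≤ V1` complementary to `V2` and `C ≤ V2` complementary to `V1`. Then
`⋀²V = ⋀²V1 + ⋀²V2 + A ∧ C`. For `ξ ∈ V1⁰` and `η ∈ V2⁰`, the form `ξ ∧ η` vanishes on
`⋀²V1 + ⋀²V2` and acts on `A ∧ C` by `a ∧ c ↦ -ξ(c) η(a)`. Since `V1⁰` restricts onto `C*`
and `V2⁰` onto `A*`, dual bases of `C` and `A` give functionals of this kind that are
biorthogonal to the basis `aᵢ ∧ cⱼ` of `A ∧ C`. So the only element of `A ∧ C` that they
all annihilate is zero. -/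

lemma Submodule.eq_zero_of_mem_span_of_biorthogonal {R M n : Type*} [CommSemiring R]
    [AddCommMonoid M] [Module R M] [DecidableEq n] {e : n → M} {φ : n → Dual R M}
    (hφe : ∀ i j, φ i (e j) = if i = j then 1 else 0) {μ : M}
    (hμ : μ ∈ Submodule.span R (Set.range e)) (hφμ : ∀ i, φ i μ = 0) : μ = 0 := by
  obtain ⟨c, rfl⟩ := Finsupp.mem_span_range_iff_exists_finsupp.mp hμ
  have hc : c = 0 := by
    ext i
    simpa [Finsupp.sum, map_sum, hφe] using hφμ i
  simp [hc]

lemma Submodule.exists_dualAnnihilator_biorthogonal {K V n : Type*} [Field K] [AddCommGroup V]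
    [Module K V] [DecidableEq n] {W C : Submodule K V} (h : IsCompl W C) (b : Basis n K C) :
    ∃ ξ : n → Dual K V, (∀ i, ξ i ∈ W.dualAnnihilator) ∧
      ∀ i j, ξ i (b j) = if i = j then 1 else 0 := by
  refine ⟨fun i => b.coord i ∘ₗ C.projectionOnto W h.symm, fun i => ?_, fun i j => ?_⟩
  · rw [Submodule.mem_dualAnnihilator]
    intro w hw
    simp [Submodule.projectionOnto_apply_of_mem_right h.symm hw]
  · simp [Finsupp.single_apply, eq_comm]

section ExteriorSquare

variable {K V : Type*} [Field K] [AddCommGroup V] [Module K V]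

lemma exteriorSquare_eq_map_mul_map :
    exteriorSquare K V = (⊤ : Submodule K V).map (ι K) * (⊤ : Submodule K V).map (ι K) := by
  rw [exteriorSquare, Submodule.map_top, pow_two]

lemma exteriorSquareOf_eq_map_mul_map (W : Submodule K V) :
    exteriorSquareOf W = W.map (ι K) * W.map (ι K) := by
  rw [exteriorSquareOf, LinearMap.range_comp, Submodule.range_subtype, pow_two]

lemma map_ι_mul_map_ι_comm (P Q : Submodule K V) :
    P.map (ι K) * Q.map (ι K) = Q.map (ι K) * P.map (ι K) := by
  suffices h : ∀ P Q : Submodule K V, P.map (ι K) * Q.map (ι K) ≤ Q.map (ι K) * P.map (ι K) from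
    le_antisymm (h P Q) (h Q P)
  intro P Q
  rw [Submodule.mul_le]
  rintro _ ⟨u, hu, rfl⟩ _ ⟨w, hw, rfl⟩
  rw [eq_neg_of_add_eq_zero_left (ι_add_mul_swap u w)]
  exact neg_mem (Submodule.mul_mem_mul ⟨w, hw, rfl⟩ ⟨u, hu, rfl⟩)

lemma exteriorSquare_le_sup_map_ι_mul_map_ι {V1 V2 A C : Submodule K V} (hA : A ⊔ V2 = ⊤)
    (hC : V1 ⊔ C = ⊤) (hCV2 : C ≤ V2) :
    exteriorSquare K V ≤
      exteriorSquareOf V1 ⊔ exteriorSquareOf V2 ⊔ A.map (ι K) * C.map (ι K) := by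
  have hTC : (⊤ : Submodule K V).map (ι K) * C.map (ι K) ≤
      A.map (ι K) * C.map (ι K) ⊔ exteriorSquareOf V2 := by
    rw [← hA, Submodule.map_sup, Submodule.sup_mul, exteriorSquareOf_eq_map_mul_map]
    exact sup_le_sup_left (mul_le_mul_right (Submodule.map_mono hCV2) _) _
  calc exteriorSquare K V
      = (⊤ : Submodule K V).map (ι K) * V1.map (ι K) ⊔
          (⊤ : Submodule K V).map (ι K) * C.map (ι K) := by
        rw [exteriorSquare_eq_map_mul_map, ← Submodule.mul_sup, ← Submodule.map_sup, hC]
    _ = exteriorSquareOf V1 ⊔ V1.map (ι K) * C.map (ι K) ⊔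
          (⊤ : Submodule K V).map (ι K) * C.map (ι K) := by
        rw [map_ι_mul_map_ι_comm, ← hC, Submodule.map_sup, Submodule.mul_sup,
          exteriorSquareOf_eq_map_mul_map]
    _ ≤ exteriorSquareOf V1 ⊔ (⊤ : Submodule K V).map (ι K) * C.map (ι K) := by
        rw [sup_assoc]
        exact sup_le_sup_left (sup_le (mul_le_mul_left (Submodule.map_mono le_top) _) le_rfl) _
    _ ≤ exteriorSquareOf V1 ⊔ exteriorSquareOf V2 ⊔ A.map (ι K) * C.map (ι K) := by
        grw [hTC]
        rw [sup_assoc, sup_comm (A.map (ι K) * _)]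

lemma map_ι_eq_span_range_basis {n : Type*} (W : Submodule K V) (b : Basis n K W) :
    W.map (ι K) = Submodule.span K (Set.range fun i => ι K (b i : V)) := by
  conv_lhs => rw [← Submodule.map_subtype_top W, ← b.span_eq, Submodule.map_span,
    Submodule.map_span, ← Set.range_comp, ← Set.range_comp]
  rfl

lemma map_ι_mul_map_ι_eq_span_range_basis {m n : Type*} {A C : Submodule K V}
    (bA : Basis m K A) (bC : Basis n K C) :
    A.map (ι K) * C.map (ι K) =
      Submodule.span K (Set.range fun p : m × n => ι K (bA p.1 : V) * ι K (bC p.2 : V)) := by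
  rw [map_ι_eq_span_range_basis A bA, map_ι_eq_span_range_basis C bC, Submodule.span_mul_span,
    ← Set.image2_mul, Set.image2_range]

lemma extPairing_ι_mul_ι (ξ η : Dual K V) (u w : V) :
    extPairing K V (ι K ξ * ι K η) (ι K u * ι K w) = ξ u * η w - ξ w * η u := by
  rw [extPairing, liftAlternating_ι_mul, liftAlternating_ι]
  change liftDeg2 K V (innerAlt V ξ η) _ = _
  rw [liftDeg2, LinearMap.comp_apply, liftAlternating_ι_mul, liftAlternating_ι]
  rfl

lemma extPairing_eq_zero_of_mem_exteriorSquareOf {W : Submodule K V} {ξ η : Dual K V}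
    (h : ξ ∈ W.dualAnnihilator ∨ η ∈ W.dualAnnihilator) {p : ExteriorAlgebra K V}
    (hp : p ∈ exteriorSquareOf W) : extPairing K V (ι K ξ * ι K η) p = 0 := by
  suffices exteriorSquareOf W ≤ LinearMap.ker (extPairing K V (ι K ξ * ι K η)) from this hp
  rw [exteriorSquareOf_eq_map_mul_map, Submodule.mul_le]
  rintro _ ⟨u, hu, rfl⟩ _ ⟨w, hw, rfl⟩
  rw [LinearMap.mem_ker, extPairing_ι_mul_ι]
  rcases h with h | h <;> simp [(Submodule.mem_dualAnnihilator _).mp h _ hu,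
    (Submodule.mem_dualAnnihilator _).mp h _ hw]

lemma extPairing_eq_zero_of_mem_sup {V1 V2 : Submodule K V} {ξ η : Dual K V}
    (hξ : ξ ∈ V1.dualAnnihilator) (hη : η ∈ V2.dualAnnihilator) {p : ExteriorAlgebra K V}
    (hp : p ∈ exteriorSquareOf V1 ⊔ exteriorSquareOf V2) :
    extPairing K V (ι K ξ * ι K η) p = 0 := by
  obtain ⟨p1, hp1, p2, hp2, rfl⟩ := Submodule.mem_sup.mp hp
  rw [map_add, extPairing_eq_zero_of_mem_exteriorSquareOf (.inl hξ) hp1,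
    extPairing_eq_zero_of_mem_exteriorSquareOf (.inr hη) hp2, add_zero]

lemma eq_zero_of_mem_map_ι_mul_map_ι {V1 V2 A C : Submodule K V} (hA : IsCompl A V2)
    (hC : IsCompl V1 C) (hAV1 : A ≤ V1) (hCV2 : C ≤ V2) {μ : ExteriorAlgebra K V}
    (hμ : μ ∈ A.map (ι K) * C.map (ι K))
    (h : ∀ ξ ∈ V1.dualAnnihilator, ∀ η ∈ V2.dualAnnihilator,
      extPairing K V (ι K ξ * ι K η) μ = 0) :
    μ = 0 := by
  classical
  let bA := Basis.ofVectorSpace K A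
  let bC := Basis.ofVectorSpace K C
  obtain ⟨η, hηV2, hηA⟩ := Submodule.exists_dualAnnihilator_biorthogonal hA.symm bA
  obtain ⟨ξ, hξV1, hξC⟩ := Submodule.exists_dualAnnihilator_biorthogonal hC bC
  have hξA : ∀ j k, ξ j (bA k) = 0 := fun j k =>
    (Submodule.mem_dualAnnihilator _).mp (hξV1 j) _ (hAV1 (bA k).2)
  have hηC : ∀ i l, η i (bC l) = 0 := fun i l =>
    (Submodule.mem_dualAnnihilator _).mp (hηV2 i) _ (hCV2 (bC l).2)
  rw [map_ι_mul_map_ι_eq_span_range_basis bA bC] at hμ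
  -- `ξ ∧ η` pairs with `a ∧ c` as `-ξ(c) η(a)`, hence the sign in `φ`
  refine Submodule.eq_zero_of_mem_span_of_biorthogonal
    (φ := fun p => -extPairing K V (ι K (ξ p.2) * ι K (η p.1))) ?_ hμ
    fun p => by rw [LinearMap.neg_apply, h _ (hξV1 _) _ (hηV2 _), neg_zero]
  rintro ⟨i, j⟩ ⟨k, l⟩
  dsimp only
  rw [LinearMap.neg_apply, extPairing_ι_mul_ι, hξA, hηC, hξC, hηA]
  by_cases hik : i = k <;> by_cases hjl : j = l <;> simp [hik, hjl]

end ExteriorSquare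

set_option synthInstance.maxHeartbeats 400000 in
theorem annihilator_wedge_dualAnnihilators_general {K V : Type*} [Field K] [AddCommGroup V]
    [Module K V] (V1 V2 : Submodule K V) (hspan : V1 ⊔ V2 = ⊤)
    (π : ExteriorAlgebra K V) (hπ : π ∈ exteriorSquare K V) :
    (∀ s ∈ Submodule.span K {z : ExteriorAlgebra K (Dual K V) |
        ∃ ξ ∈ V1.dualAnnihilator, ∃ η ∈ V2.dualAnnihilator, z = ι K ξ * ι K η},
      extPairing K V s π = 0) ↔
      π ∈ exteriorSquareOf V1 ⊔ exteriorSquareOf V2 := by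
  constructor
  · intro hann
    obtain ⟨A, hAV1, hA⟩ := (codisjoint_iff.mpr hspan).exists_isCompl
    obtain ⟨C, hCV2, hC⟩ := (codisjoint_iff.mpr hspan).symm.exists_isCompl
    obtain ⟨σ, hσ, μ, hμ, rfl⟩ := Submodule.mem_sup.mp
      (exteriorSquare_le_sup_map_ι_mul_map_ι hA.sup_eq_top hC.symm.sup_eq_top hCV2 hπ)
    suffices μ = 0 by rwa [this, add_zero]
    refine eq_zero_of_mem_map_ι_mul_map_ι hA hC.symm hAV1 hCV2 hμ fun ξ hξ η hη => ?_
    have h := hann _ (Submodule.subset_span ⟨ξ, hξ, η, hη, rfl⟩)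
    rwa [map_add, extPairing_eq_zero_of_mem_sup hξ hη hσ, zero_add] at h
  · intro hmem s hs
    refine (Submodule.span_le (p := LinearMap.ker ((extPairing K V).flip π))).mpr ?_ hs
    rintro _ ⟨ξ, hξ, η, hη, rfl⟩
    exact extPairing_eq_zero_of_mem_sup hξ hη hmem

set_option synthInstance.maxHeartbeats 400000 in
/-- **The key identity in the proof of Lemma 3.5 of Goodearl–Yakimov.**  Let `V` be a
finite-dimensional vector space over a field `K` and `V1, V2` subspaces with
`V1 + V2 = V`.  Under the canonical nondegenerate pairing between `⋀²V` and `⋀²(V*)`,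
the annihilator inside `⋀²V` of the subspace `V1⁰ ∧ V2⁰ ⊆ ⋀²(V*)` (the span of all
`ξ ∧ η` with `ξ ∈ V1⁰`, `η ∈ V2⁰`) is exactly `⋀²V1 + ⋀²V2`. -/
theorem annihilator_wedge_dualAnnihilators {K V : Type*} [Field K] [AddCommGroup V]
    [Module K V] [FiniteDimensional K V] (V1 V2 : Submodule K V) (hspan : V1 ⊔ V2 = ⊤)
    (π : ExteriorAlgebra K V) (hπ : π ∈ exteriorSquare K V) :
    (∀ s ∈ Submodule.span K {z : ExteriorAlgebra K (Dual K V) |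
        ∃ ξ ∈ V1.dualAnnihilator, ∃ η ∈ V2.dualAnnihilator, z = ι K ξ * ι K η},
      extPairing K V s π = 0) ↔
      π ∈ exteriorSquareOf V1 ⊔ exteriorSquareOf V2 :=
  annihilator_wedge_dualAnnihilators_general V1 V2 hspan π hπ
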